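/- In ℂ⟨X₁,…,Xₙ⟩, the intersection of the cone of sums of hermitian squares with the span of commutators is trivial: Q(ℂ⟨X⟩) ∩ C_cyc = {0}. Equivalently, if a sum of hermitian squares Σᵢ Pᵢ*Pᵢ is a sum of commutators, then it is zero. -/

import Mathlib

noncomputable section

/-- The free `*`-algebra `ℂ⟨X⟩` on a set `X` of self-adjoint variables. -/
abbrev FA (X : Type) : Type := FreeAlgebra ℂ X

/-- Coefficients of a non-commutative polynomial, indexed by words. -/
def coefficient {X : Type} (P : FA X) : FreeMonoid X →₀ ℂ :=
  (FreeAlgebra.equivMonoidAlgebraFreeMonoid P).coeff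

/-- The involution on `ℂ⟨X⟩` fixing the variables, reversing words and
conjugating coefficients. -/
def cstar {X : Type} (P : FA X) : FA X :=
  star <| (FreeAlgebra.equivMonoidAlgebraFreeMonoid (R := ℂ) (X := X)).symm <| MonoidAlgebra.ofCoeff <|
    Finsupp.mapRange (starRingEnd ℂ) (map_zero _) (coefficient P)

/-- The convex cone `Q(ℂ⟨X⟩)` of sums of hermitian squares. -/
def Qcone (X : Type) : Set (FA X) :=
  {x | ∃ (m : ℕ) (P : Fin m → FA X), x = ∑ i, cstar (P i) * P i}

/-- The span `C_cyc` of all commutators. -/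
def Ccyc (X : Type) : Submodule ℂ (FA X) :=
  Submodule.span ℂ {x | ∃ P Q : FA X, x = P * Q - Q * P}

/-!
Every hermitian matrix tuple `A` gives a `*`-representation `FreeAlgebra.lift ℂ A` of `ℂ⟨X⟩` on
a finite-dimensional space. It maps a sum of hermitian squares to a positive semidefinite matrix
and a sum of commutators to a traceless one, so an element of `Q(ℂ⟨X⟩) ∩ C_cyc` vanishes in every
such representation. These representations separate points: if `w` is a longest word in the
support of `x ≠ 0`, the labelled path matrices of `w` send `x` to a matrix whose corner entry is
the coefficient of `w` in `x`.
-/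

open scoped Matrix ComplexOrder

namespace FreeAlgebra

variable {R X : Type*} [CommSemiring R]

theorem equivMonoidAlgebraFreeMonoid_symm_single (u : FreeMonoid X) (c : R) :
    equivMonoidAlgebraFreeMonoid.symm (MonoidAlgebra.single u c) = c • FreeMonoid.lift (ι R) u :=
  MonoidAlgebra.lift_single _ _ _

theorem lift_freeMonoidLift_ι {A : Type*} [Semiring A] [Algebra R A] (f : X → A)
    (u : FreeMonoid X) : lift R f (FreeMonoid.lift (ι R) u) = FreeMonoid.lift f u := by
  simp [FreeMonoid.lift_apply, map_list_prod]

theorem star_smul (c : R) (P : FreeAlgebra R X) : star (c • P) = c • star P :=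
  congrArg MulOpposite.unop (map_smul (starHom (R := R) (X := X)) c P)

end FreeAlgebra

theorem FreeMonoid.star_lift {X M : Type*} [Monoid M] [StarMul M] (f : X → M)
    (hf : ∀ x, IsSelfAdjoint (f x)) (u : FreeMonoid X) :
    star (FreeMonoid.lift f u) = FreeMonoid.lift f (star u) := by
  induction u using FreeMonoid.inductionOn' with
  | one => simp
  | of_mul x u ih => simp [ih, (hf x).star_eq]

section cstar

variable {X : Type}

theorem cstar_add (P Q : FA X) : cstar (P + Q) = cstar P + cstar Q := by
  simp only [cstar, coefficient, map_add, MonoidAlgebra.coeff_add,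
    Finsupp.mapRange_add (map_add (starRingEnd ℂ)), MonoidAlgebra.ofCoeff_add, star_add]

theorem cstar_single (u : FreeMonoid X) (c : ℂ) :
    cstar (FreeAlgebra.equivMonoidAlgebraFreeMonoid.symm (MonoidAlgebra.single u c)) =
      starRingEnd ℂ c • FreeMonoid.lift (FreeAlgebra.ι ℂ) (star u) := by
  rw [cstar, coefficient, AlgEquiv.apply_symm_apply, MonoidAlgebra.coeff_single,
    Finsupp.mapRange_single, ← MonoidAlgebra.single,
    FreeAlgebra.equivMonoidAlgebraFreeMonoid_symm_single, FreeAlgebra.star_smul,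
    FreeMonoid.star_lift _ fun x => FreeAlgebra.star_ι (R := ℂ) x]

theorem lift_cstar {A : Type*} [Ring A] [StarRing A] [Algebra ℂ A] [StarModule ℂ A]
    (f : X → A) (hf : ∀ x, IsSelfAdjoint (f x)) (P : FA X) :
    FreeAlgebra.lift ℂ f (cstar P) = star (FreeAlgebra.lift ℂ f P) := by
  rw [← FreeAlgebra.equivMonoidAlgebraFreeMonoid.symm_apply_apply P]
  induction FreeAlgebra.equivMonoidAlgebraFreeMonoid P using MonoidAlgebra.induction_linear with
  | zero => simp [cstar, coefficient]
  | add P Q hP hQ => rw [map_add, cstar_add, map_add, map_add, hP, hQ, star_add]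
  | single u c =>
    rw [cstar_single, FreeAlgebra.equivMonoidAlgebraFreeMonoid_symm_single, map_smul, map_smul,
      FreeAlgebra.lift_freeMonoidLift_ι, FreeAlgebra.lift_freeMonoidLift_ι,
      ← FreeMonoid.star_lift f hf, star_smul]
    rfl

end cstar

theorem lift_eq_sum_coefficient {X : Type} {A : Type*} [Semiring A] [Algebra ℂ A] (f : X → A)
    (x : FA X) :
    FreeAlgebra.lift ℂ f x = (coefficient x).sum fun u c => c • FreeMonoid.lift f u := by
  conv_lhs => rw [← FreeAlgebra.equivMonoidAlgebraFreeMonoid.symm_apply_apply x,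
    ← MonoidAlgebra.sum_coeff_single (FreeAlgebra.equivMonoidAlgebraFreeMonoid x)]
  simp only [map_finsuppSum, FreeAlgebra.equivMonoidAlgebraFreeMonoid_symm_single, map_smul,
    FreeAlgebra.lift_freeMonoidLift_ι, coefficient]

section Representations

variable {X N : Type} [Fintype N] [DecidableEq N]

theorem trace_eq_zero_of_mem_Ccyc (φ : FA X →ₐ[ℂ] Matrix N N ℂ) {x : FA X} (hx : x ∈ Ccyc X) :
    (φ x).trace = 0 := by
  refine Submodule.span_le (p := LinearMap.ker (Matrix.traceLinearMap N ℂ ℂ ∘ₗ φ.toLinearMap))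
    |>.mpr ?_ hx
  rintro _ ⟨P, Q, rfl⟩
  simp only [SetLike.mem_coe, LinearMap.mem_ker, LinearMap.comp_apply, AlgHom.toLinearMap_apply,
    Matrix.traceLinearMap_apply, map_sub, map_mul, Matrix.trace_mul_comm (φ P), sub_self]

theorem posSemidef_lift_of_mem_Qcone (A : X → Matrix N N ℂ) (hA : ∀ j, (A j).IsHermitian)
    {x : FA X} (hx : x ∈ Qcone X) : (FreeAlgebra.lift ℂ A x).PosSemidef := by
  obtain ⟨m, P, rfl⟩ := hx
  rw [map_sum]
  refine Matrix.posSemidef_sum _ fun i _ => ?_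
  rw [map_mul, lift_cstar A hA]
  exact Matrix.posSemidef_conjTranspose_mul_self _

theorem lift_eq_zero_of_mem_Qcone_of_mem_Ccyc (A : X → Matrix N N ℂ)
    (hA : ∀ j, (A j).IsHermitian) {x : FA X} (hQ : x ∈ Qcone X) (hC : x ∈ Ccyc X) :
    FreeAlgebra.lift ℂ A x = 0 :=
  (posSemidef_lift_of_mem_Qcone A hA hQ).trace_eq_zero_iff.mp (trace_eq_zero_of_mem_Ccyc _ hC)

end Representations

theorem List.cons_eq_drop_iff {α : Type*} (l t : List α) (j : α) (p : ℕ) :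
    j :: t = l.drop p ↔ l[p]? = some j ∧ t = l.drop (p + 1) := by
  rcases lt_or_ge p l.length with h | h
  · rw [List.drop_eq_getElem_cons h, List.getElem?_eq_getElem h, List.cons_eq_cons,
      Option.some_inj, eq_comm (a := j)]
  · simp [List.drop_eq_nil_of_le h, List.getElem?_eq_none h]

section PathMatrix

variable {X : Type} [DecidableEq X]

/-- The adjacency matrix of the path `0 — 1 — ⋯ — l.length` restricted to the edges
`{p, p + 1}` with label `l[p] = j`. -/
def pathMatrix (l : List X) (j : X) : Matrix (Fin (l.length + 1)) (Fin (l.length + 1)) ℂ :=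
  Matrix.of fun p q =>
    if ((p : ℕ) + 1 = q ∧ l[(p : ℕ)]? = some j) ∨ ((q : ℕ) + 1 = p ∧ l[(q : ℕ)]? = some j) then 1
    else 0

theorem pathMatrix_isHermitian (l : List X) (j : X) : (pathMatrix l j).IsHermitian := by
  ext p q
  simp only [Matrix.conjTranspose_apply, pathMatrix, Matrix.of_apply, or_comm]
  split_ifs <;> simp

/-- A walk of `u.length` steps from `p` can only reach the end of the path by stepping forward
every time, reading off the labels `l.drop p`. -/
theorem list_prod_map_pathMatrix_apply_last (l u : List X) (p : Fin (l.length + 1))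
    (hp : (p : ℕ) + u.length ≤ l.length) :
    (u.map (pathMatrix l)).prod p (Fin.last _) = if u = l.drop p then 1 else 0 := by
  induction u generalizing p with
  | nil =>
    rw [List.map_nil, List.prod_nil, Matrix.one_apply]
    simp only [eq_comm (a := []), List.drop_eq_nil_iff, p.is_le.ge_iff_eq, Fin.ext_iff,
      Fin.val_last]
  | cons j t ih =>
    simp only [List.length_cons] at hp
    let p' : Fin (l.length + 1) := ⟨p + 1, by omega⟩
    rw [List.map_cons, List.prod_cons, Matrix.mul_apply, Finset.sum_eq_single p',
      ih p' (by simp [p']; omega)]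
    · have hentry : pathMatrix l j p p' = if l[(p : ℕ)]? = some j then 1 else 0 := by
        simp [pathMatrix, p', show (p : ℕ) + 1 + 1 ≠ p by omega]
      simp only [List.cons_eq_drop_iff, hentry, p', ite_zero_mul_ite_zero, ite_and, mul_one]
    · intro q _ hq
      by_cases hqp : (q : ℕ) + 1 = p
      · have hshort : t ≠ l.drop q := fun h => by
          have := congrArg List.length h
          simp only [List.length_drop] at this
          omega
        rw [ih q (by omega), if_neg hshort, mul_zero]
      · have hpq : (p : ℕ) + 1 ≠ q := fun h => hq (Fin.ext h.symm)
        simp [pathMatrix, hpq, hqp]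
    · simp

theorem lift_pathMatrix_apply_zero_last (w : FreeMonoid X) (x : FA X)
    (hx : ∀ u ∈ (coefficient x).support, u.length ≤ w.length) :
    FreeAlgebra.lift ℂ (pathMatrix w.toList) x 0 (Fin.last _) = coefficient x w := by
  rw [lift_eq_sum_coefficient, Finsupp.sum, Matrix.sum_apply, Finset.sum_eq_single w]
  · have := list_prod_map_pathMatrix_apply_last w.toList w.toList 0 (by simp)
    simp [FreeMonoid.lift_apply, this]
  · intro u hu huw
    have := list_prod_map_pathMatrix_apply_last w.toList u.toList 0
      (by simpa [FreeMonoid.length] using hx u hu)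
    simp [FreeMonoid.lift_apply, this, huw]
  · intro hw
    simp [Finsupp.notMem_support_iff.mp hw]

theorem exists_lift_pathMatrix_ne_zero {x : FA X} (hx : x ≠ 0) :
    ∃ l : List X, FreeAlgebra.lift ℂ (pathMatrix l) x ≠ 0 := by
  have hsupp : (coefficient x).support.Nonempty := by
    rwa [Finsupp.support_nonempty_iff, coefficient, Ne, MonoidAlgebra.coeff_eq_zero,
      AddEquivClass.map_eq_zero_iff]
  obtain ⟨w, hw, hmax⟩ := (coefficient x).support.exists_max_image FreeMonoid.length hsupp
  refine ⟨w.toList, fun h0 => Finsupp.mem_support_iff.mp hw ?_⟩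
  rw [← lift_pathMatrix_apply_zero_last w x hmax, h0, Matrix.zero_apply]

end PathMatrix

/-- In `ℂ⟨X₁,…,Xₙ⟩`, a sum of hermitian squares which is a sum
of commutators is zero: `Q(ℂ⟨X⟩) ∩ C_cyc = {0}`. -/
theorem Qcone_inter_Ccyc (n : ℕ) :
    Qcone (Fin n) ∩ (Ccyc (Fin n) : Set (FA (Fin n))) = {0} := by
  ext x
  constructor
  · rintro ⟨hQ, hC⟩
    by_contra hx
    obtain ⟨l, hl⟩ := exists_lift_pathMatrix_ne_zero hx
    exact hl (lift_eq_zero_of_mem_Qcone_of_mem_Ccyc _ (pathMatrix_isHermitian l) hQ hC)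
  · rintro rfl
    exact ⟨⟨0, Fin.elim0, by simp⟩, zero_mem _⟩
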